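/- If a transition system has a finite set of control states, a finite stack alphabet, and each transition either pushes one symbol, pops one symbol, or leaves the stack unchanged (depending only on the control state and top stack symbol), then the set of reachable configurations from a given initial configuration forms a regular set of stack words per control state, and reachability of a given configuration is decidable. -/

import Mathlib

/-- Stack effect of a pushdown rule: push one symbol, pop one symbol, or
leave the stack unchanged. -/
inductive StackOp (Γ : Type*)
  | push (γ : Γ)
  | pop
  | id

/-- A pushdown rule: depending only on the control state and the top stack
symbol (`none` meaning the stack is empty), move to a new control state and
perform a stack operation. -/
structure PDSRule (Q Γ : Type*) where
  src : Q
  top : Option Γ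
  dst : Q
  op : StackOp Γ

/-- How a single rule transforms a configuration. -/
def PDSRule.Applies {Q Γ : Type*} (r : PDSRule Q Γ)
    (c c' : Q × List Γ) : Prop :=
  c.1 = r.src ∧ c'.1 = r.dst ∧
    match r.top, c.2 with
    | some γ, γ₀ :: w =>
        γ₀ = γ ∧
        match r.op with
        | .push γ' => c'.2 = γ' :: γ₀ :: w
        | .pop => c'.2 = w
        | .id => c'.2 = γ₀ :: w
    | none, [] =>
        match r.op with
        | .push γ' => c'.2 = [γ']
        | .pop => False
        | .id => c'.2 = []
    | _, _ => False

/-- The transition relation generated by a finite set of rules. -/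
def PDSStep {Q Γ : Type*} (rules : List (PDSRule Q Γ)) :
    Q × List Γ → Q × List Γ → Prop :=
  fun c c' => ∃ r ∈ rules, r.Applies c c'

/-!
Saturation (post*) construction: the reachable configurations are recognised by a finite
automaton whose states are the control states, one fresh state per pair `(q', γ')` of a push
rule target, and the positions of the initial stack. Starting from the automaton that reads the
initial stack from the initial control state, each rule adds edges that simulate it on the first
letter(s) read from its source state; pops become ε-edges, which are composed on the left so
that acceptance needs no ε-closure. Completeness is an induction on the run of the pushdown
system; soundness is an induction on the saturation, with an invariant saying what reading a
word from each automaton state means.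
-/

theorem NFA.exists_dfa_fin_accepts_eq {α σ : Type*} [Finite σ] (M : NFA α σ) :
    ∃ (n : ℕ) (M' : DFA α (Fin n)), M'.accepts = M.accepts := by
  have : Fintype (Set σ) := Fintype.ofFinite _
  exact ⟨_, M.toDFA.reindex (Fintype.equivFin _), by
    rw [DFA.accepts_reindex, NFA.toDFA_correct]⟩

namespace PostStar

variable {Q Γ : Type*}

/-- `.inl q` is a control state, `.inr (.inl (q, γ))` is reached from `q` by reading a pushed
`γ`, and `.inr (.inr i)` is position `i` of the initial stack. -/
abbrev State (Q Γ : Type*) (init : Q × List Γ) : Type _ :=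
  Q ⊕ (Q × Γ) ⊕ Fin (init.2.length + 1)

def final (init : Q × List Γ) : State Q Γ init := .inr (.inr (Fin.last _))

inductive Edge (rules : List (PDSRule Q Γ)) (init : Q × List Γ) :
    State Q Γ init → Option Γ → State Q Γ init → Prop
  | stack (i : Fin init.2.length) :
      Edge rules init (.inr (.inr i.castSucc)) (some init.2[i]) (.inr (.inr i.succ))
  | start : Edge rules init (.inl init.1) none (.inr (.inr 0))
  | epsTrans {s t u a} : Edge rules init s none t → Edge rules init t a u →
      Edge rules init s a u
  | id {p p' γ s} : ⟨p, some γ, p', .id⟩ ∈ rules →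
      Edge rules init (.inl p) (some γ) s → Edge rules init (.inl p') (some γ) s
  | pop {p p' γ s} : ⟨p, some γ, p', .pop⟩ ∈ rules →
      Edge rules init (.inl p) (some γ) s → Edge rules init (.inl p') none s
  | pushFresh (p : Q) (γ : Γ) : Edge rules init (.inl p) (some γ) (.inr (.inl (p, γ)))
  -- `(p', γ' :: γ :: w)` is read along `p' --γ'--> (p', γ') --γ--> s`
  | push {p p' γ γ' s} : ⟨p, some γ, p', .push γ'⟩ ∈ rules →
      Edge rules init (.inl p) (some γ) s → Edge rules init (.inr (.inl (p', γ'))) (some γ) s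
  | idEmpty {p p'} : ⟨p, none, p', .id⟩ ∈ rules →
      Edge rules init (.inl p) none (final init) → Edge rules init (.inl p') none (final init)
  | pushEmpty {p p' γ'} : ⟨p, none, p', .push γ'⟩ ∈ rules →
      Edge rules init (.inl p) none (final init) →
      Edge rules init (.inr (.inl (p', γ'))) none (final init)

def Accepts (rules : List (PDSRule Q Γ)) (init : Q × List Γ) :
    State Q Γ init → List Γ → Prop
  | s, [] => s = final init ∨ Edge rules init s none (final init)
  | s, γ :: w => ∃ t, Edge rules init s (some γ) t ∧ Accepts rules init t w

def nfa (rules : List (PDSRule Q Γ)) (init : Q × List Γ) (q : Q) : NFA Γ (State Q Γ init) where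
  step s γ := {t | Edge rules init s (some γ) t}
  start := {.inl q}
  accept := {s | Accepts rules init s []}

variable {rules : List (PDSRule Q Γ)} {init : Q × List Γ}

theorem mem_nfa_acceptsFrom_iff {q : Q} {S : Set (State Q Γ init)} {w : List Γ} :
    w ∈ (nfa rules init q).acceptsFrom S ↔ ∃ s ∈ S, Accepts rules init s w := by
  induction w generalizing S with
  | nil => exact NFA.nil_mem_acceptsFrom _
  | cons γ w ih =>
    simp only [NFA.cons_mem_acceptsFrom, ih, NFA.mem_stepSet, Accepts]
    exact ⟨fun ⟨t, ⟨s, hs, hst⟩, ht⟩ => ⟨s, hs, t, hst, ht⟩,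
      fun ⟨s, hs, t, hst, ht⟩ => ⟨t, ⟨s, hs, hst⟩, ht⟩⟩

theorem Accepts.of_eps {s t : State Q Γ init} {w : List Γ} (hst : Edge rules init s none t)
    (ht : Accepts rules init t w) : Accepts rules init s w := by
  cases w with
  | nil => exact .inr (ht.elim (fun h => h ▸ hst) (Edge.epsTrans hst))
  | cons γ w =>
    obtain ⟨u, htu, hu⟩ := ht
    exact ⟨u, hst.epsTrans htu, hu⟩

theorem accepts_stack_drop {i : ℕ} (hi : i ≤ init.2.length) :
    Accepts rules init (.inr (.inr ⟨i, Nat.lt_succ_of_le hi⟩)) (init.2.drop i) := by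
  induction hi using Nat.decreasingInduction with
  | self => rw [List.drop_length]; exact .inl rfl
  | of_succ k hk ih =>
    rw [← List.getElem_cons_drop hk]
    exact ⟨_, Edge.stack ⟨k, hk⟩, ih⟩

theorem accepts_init : Accepts rules init (.inl init.1) init.2 :=
  Accepts.of_eps Edge.start (by simpa using accepts_stack_drop (rules := rules) (Nat.zero_le _))

theorem Accepts.of_applies {r : PDSRule Q Γ} (hr : r ∈ rules) {c c' : Q × List Γ}
    (h : r.Applies c c') (hc : Accepts rules init (.inl c.1) c.2) :
    Accepts rules init (.inl c'.1) c'.2 := by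
  obtain ⟨p, top, p', op⟩ := r
  obtain ⟨q, w⟩ := c
  obtain ⟨q', w'⟩ := c'
  obtain ⟨rfl, rfl, h⟩ := h
  cases top with
  | some γ =>
    obtain _ | ⟨γ₀, w⟩ := w
    · exact h.elim
    obtain ⟨rfl, h⟩ := h
    obtain ⟨s, hs, hacc⟩ := hc
    cases op with
    | push γ' => subst h; exact ⟨_, .pushFresh q' γ', s, .push hr hs, hacc⟩
    | pop => subst h; exact hacc.of_eps (.pop hr hs)
    | id => subst h; exact ⟨s, .id hr hs, hacc⟩
  | none =>
    obtain _ | ⟨γ₀, w⟩ := w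
    · have hfin : Edge rules init (.inl q) none (final init) :=
        hc.resolve_left (by simp [final])
      cases op with
      | push γ' => subst h; exact ⟨_, .pushFresh q' γ', .inr (.pushEmpty hr hfin)⟩
      | pop => exact h.elim
      | id => subst h; exact .inr (.idEmpty hr hfin)
    · exact h.elim

theorem accepts_of_reach {c : Q × List Γ} (h : Relation.ReflTransGen (PDSStep rules) init c) :
    Accepts rules init (.inl c.1) c.2 := by
  induction h with
  | refl => exact accepts_init
  | tail _ hstep ih =>
    obtain ⟨r, hr, happ⟩ := hstep
    exact ih.of_applies hr happ

def Denotes (rules : List (PDSRule Q Γ)) (init : Q × List Γ) :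
    State Q Γ init → List Γ → Prop
  | .inl q, w => Relation.ReflTransGen (PDSStep rules) init (q, w)
  | .inr (.inl (q, γ)), w => Relation.ReflTransGen (PDSStep rules) init (q, γ :: w)
  | .inr (.inr i), w => w = init.2.drop i

theorem denotes_final : Denotes rules init (final init) [] := by
  simp [Denotes, final]

theorem Denotes.of_edge {s t : State Q Γ init} {a : Option Γ} (hst : Edge rules init s a t)
    {w : List Γ} (ht : Denotes rules init t w) : Denotes rules init s (a.toList ++ w) := by
  induction hst generalizing w with
  | stack i =>
    simp only [Denotes, Fin.val_succ, Fin.val_castSucc] at ht ⊢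
    simp [ht]
  | start => subst ht; exact .refl
  | epsTrans _ _ ih₁ ih₂ => exact ih₁ (ih₂ ht)
  | id hr _ ih => exact (ih ht).tail ⟨_, hr, rfl, rfl, rfl, rfl⟩
  | pop hr _ ih => exact (ih ht).tail ⟨_, hr, rfl, rfl, rfl, rfl⟩
  | pushFresh => exact ht
  | push hr _ ih => exact (ih ht).tail ⟨_, hr, rfl, rfl, rfl, rfl⟩
  | idEmpty hr _ ih =>
    obtain rfl : w = [] := by simpa [Denotes, final] using ht
    exact (ih denotes_final).tail ⟨_, hr, rfl, rfl, rfl⟩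
  | pushEmpty hr _ ih =>
    obtain rfl : w = [] := by simpa [Denotes, final] using ht
    exact (ih denotes_final).tail ⟨_, hr, rfl, rfl, rfl⟩

theorem Accepts.denotes {s : State Q Γ init} {w : List Γ} (h : Accepts rules init s w) :
    Denotes rules init s w := by
  induction w generalizing s with
  | nil =>
    exact h.elim (fun hs => hs ▸ denotes_final) (fun hs => Denotes.of_edge hs denotes_final)
  | cons γ w ih =>
    obtain ⟨t, hst, ht⟩ := h
    exact Denotes.of_edge hst (ih ht)

theorem mem_nfa_accepts_iff {q : Q} {w : List Γ} :
    w ∈ (nfa rules init q).accepts ↔ Relation.ReflTransGen (PDSStep rules) init (q, w) := by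
  rw [NFA.accepts_eq_acceptsFrom_start, mem_nfa_acceptsFrom_iff]
  simp only [nfa, Set.mem_singleton_iff, exists_eq_left]
  exact ⟨Accepts.denotes, accepts_of_reach (c := (q, w))⟩

end PostStar

theorem stmt0_general {Q Γ : Type*} [Fintype Q] [Fintype Γ]
    (rules : List (PDSRule Q Γ)) (init : Q × List Γ) :
    (∀ q : Q, ∃ (n : ℕ) (M : DFA Γ (Fin n)), ∀ w : List Γ,
      w ∈ M.accepts ↔ Relation.ReflTransGen (PDSStep rules) init (q, w)) ∧
    Nonempty (DecidablePred fun c : Q × List Γ =>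
      Relation.ReflTransGen (PDSStep rules) init c) := by
  refine ⟨fun q => ?_, ⟨Classical.decPred _⟩⟩
  obtain ⟨n, M, hM⟩ := (PostStar.nfa rules init q).exists_dfa_fin_accepts_eq
  exact ⟨n, M, fun w => hM ▸ PostStar.mem_nfa_accepts_iff⟩

/-- for a pushdown system with finite control states and finite
stack alphabet, the reachable configurations form, per control state, a
regular set of stack words (recognized by some DFA), and reachability of a
given configuration is decidable. -/
theorem stmt0 {Q Γ : Type*} [Fintype Q] [DecidableEq Q] [Fintype Γ] [DecidableEq Γ]
    (rules : List (PDSRule Q Γ)) (init : Q × List Γ) :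
    (∀ q : Q, ∃ (n : ℕ) (M : DFA Γ (Fin n)), ∀ w : List Γ,
      w ∈ M.accepts ↔ Relation.ReflTransGen (PDSStep rules) init (q, w)) ∧
    Nonempty (DecidablePred fun c : Q × List Γ =>
      Relation.ReflTransGen (PDSStep rules) init c) :=
  stmt0_general rules init
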